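/- Let q be an odd prime power, T a generator of the character group of F_q^×, θ the canonical additive character, G_m the Gauss sum of T^m, and d ∈ F_q^×. Then Σ_{y,z ∈ F_q^×} θ(zd)·θ(−zy²) = 1 + q·T^{(q-1)/2}(d). -/

import Mathlib

open Finset Complex

/-- The root of unity `e^{2πi/p}`. -/
noncomputable def zetaP (p : ℕ) : ℂ := Complex.exp (2 * Real.pi * Complex.I / p)

lemma zetaP_pow (p : ℕ) (hp : p ≠ 0) : zetaP p ^ p = 1 := by
  rw [zetaP, ← Complex.exp_nat_mul]
  have : (p : ℂ) * (2 * Real.pi * Complex.I / p) = 2 * Real.pi * Complex.I := by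
    rw [mul_div_assoc']
    exact mul_div_cancel_left₀ _ (by exact_mod_cast hp)
  rw [this, Complex.exp_two_pi_mul_I]

/-- The canonical additive character `θ(α) = ζ_p^{tr α}` of a finite field of
characteristic `p`. -/
noncomputable def theta (p : ℕ) [hp : Fact p.Prime] (F : Type*) [Field F] [Fintype F] [DecidableEq F]
    [Algebra (ZMod p) F] : AddChar F ℂ :=
  (AddChar.zmodChar p (zetaP_pow p hp.out.ne_zero)).compAddMonoidHom
    (Algebra.trace (ZMod p) F).toAddMonoidHom

/-- Gauss sum `G_m = G(T^m)` with respect to the canonical additive character. -/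
noncomputable def GG (p : ℕ) [Fact p.Prime] {F : Type*} [Field F] [Fintype F] [DecidableEq F]
    [Algebra (ZMod p) F] (T : MulChar F ℂ) (m : ℤ) : ℂ :=
  gaussSum (T ^ m) (theta p F)

/-- Greene's binomial coefficient `binom(A,B) = (B(-1)/q) J(A, B⁻¹)`. -/
noncomputable def greeneBinom (F : Type*) [Field F] [Fintype F] (A B : MulChar F ℂ) : ℂ :=
  B (-1) / (Fintype.card F : ℂ) * ∑ x : F, A x * B⁻¹ (1 - x)

/-- Greene's hypergeometric series `₂F₁(A,B;C|x)`, with the sum over all characters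
written as a sum over the powers of a generator `T` of the character group. -/
noncomputable def hyp2F1 {F : Type*} [Field F] [Fintype F] (T A B C : MulChar F ℂ) (x : F) : ℂ :=
  (Fintype.card F : ℂ) / ((Fintype.card F : ℂ) - 1) *
    ∑ n ∈ Finset.range (Fintype.card F - 1),
      greeneBinom F (A * T ^ n) (T ^ n) * greeneBinom F (B * T ^ n) (C * T ^ n) * (T ^ n) x

-- helper: sum over units
lemma sum_units_eq {F : Type*} [Field F] [Fintype F] [DecidableEq F] (f : F → ℂ) :
    ∑ x : Fˣ, f x = (∑ x : F, f x) - f 0 := by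
  rw [← Finset.sum_erase_eq_sub (Finset.mem_univ (0 : F))]
  rw [← Finset.filter_ne']
  calc ∑ x : Fˣ, f ↑x = ∑ a : {x : F // x ≠ 0}, f a :=
        Fintype.sum_equiv unitsEquivNeZero _ _ (fun u => rfl)
    _ = ∑ x ∈ Finset.univ.filter (· ≠ (0:F)), f x :=
        (Finset.sum_subtype _ (by simp) f).symm

lemma theta_ne_one (p : ℕ) [hp : Fact p.Prime] (F : Type*) [Field F] [Fintype F] [DecidableEq F]
    [Algebra (ZMod p) F] : theta p F ≠ 1 := by
  have hc : CharP F p := charP_of_injective_algebraMap (algebraMap (ZMod p) F).injective p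
  have hr : ringChar F = p := ringChar.eq F p
  subst hr
  obtain ⟨b, hb⟩ := FiniteField.trace_to_zmod_nondegenerate F (one_ne_zero (α := F))
  rw [one_mul] at hb
  intro h
  apply hb
  have hb1 : theta (ringChar F) F b = 1 := by rw [h]; rfl
  have h2 : zetaP (ringChar F) ^ (Algebra.trace (ZMod (ringChar F)) F b).val = 1 := by
    simpa [theta, AddChar.zmodChar_apply] using hb1
  have hprim : IsPrimitiveRoot (zetaP (ringChar F)) (ringChar F) :=
    Complex.isPrimitiveRoot_exp _ hp.out.ne_zero
  have := (hprim.pow_eq_one_iff_dvd _).mp h2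
  have hlt := ZMod.val_lt (Algebra.trace (ZMod (ringChar F)) F b)
  have : (Algebra.trace (ZMod (ringChar F)) F b).val = 0 := Nat.eq_zero_of_dvd_of_lt this hlt
  exact (ZMod.val_eq_zero _).mp this

theorem stmt11 {p : ℕ} [hp : Fact p.Prime] (hp2 : p ≠ 2) {F : Type*} [Field F] [Fintype F] [DecidableEq F]
    [Algebra (ZMod p) F] (T : MulChar F ℂ) (hT : ∀ χ : MulChar F ℂ, ∃ n : ℕ, χ = T ^ n) (d : F) (hd : d ≠ 0) :
    ∑ y : Fˣ, ∑ z : Fˣ, theta p F ((z : F) * d) * theta p F (-(z : F) * (y : F) ^ 2) =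
      1 + (Fintype.card F : ℂ) * (T ^ ((Fintype.card F - 1) / 2)) d := by
  classical
  set q := Fintype.card F with hq
  set m := (q - 1) / 2 with hm
  have hc : CharP F p := charP_of_injective_algebraMap (algebraMap (ZMod p) F).injective p
  have hrc : ringChar F = p := ringChar.eq F p
  have hF2 : ringChar F ≠ 2 := by rw [hrc]; exact hp2
  have hθ : theta p F ≠ 1 := theta_ne_one p F
  have hprim : (theta p F).IsPrimitive := AddChar.IsPrimitive.of_ne_one hθ
  -- q is odd
  have hqodd : q % 2 = 1 := FiniteField.odd_card_of_char_ne_two hF2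
  have hqpos : 0 < q := Fintype.card_pos
  have hq1 : q - 1 = 2 * m := by omega
  -- inner sum
  have hinner : ∀ c : F, ∑ z : Fˣ, theta p F ((z : F) * c) = (if c = 0 then (q : ℂ) else 0) - 1 := by
    intro c
    rw [sum_units_eq (fun x => theta p F (x * c)), AddChar.sum_mulShift c hprim]
    simp
    rfl
  -- the character identity
  have hchar : ((quadraticChar F d : ℤ) : ℂ) = (T ^ m) d := by
    set χ' : MulChar F ℂ := (quadraticChar F).ringHomComp (Int.castRingHom ℂ) with hχ'
    have key : χ' = T ^ m := by
      haveI : NeZero ((Monoid.exponent Fˣ : ℂ)) :=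
        ⟨Nat.cast_ne_zero.mpr Monoid.exponent_ne_zero_of_finite⟩
      have hcard : Nat.card (MulChar F ℂ) = q - 1 := by
        rw [MulChar.card_eq_card_units_of_hasEnoughRootsOfUnity F ℂ, Nat.card_eq_fintype_card,
          Fintype.card_units]
      have hzp : Subgroup.zpowers T = ⊤ := by
        rw [Subgroup.eq_top_iff']
        intro χ
        obtain ⟨n, rfl⟩ := hT χ
        exact ⟨(n : ℤ), by simp⟩
      have hord : orderOf T = q - 1 := by
        rw [← Nat.card_zpowers, hzp, Subgroup.card_top, hcard]
      have hTq1 : T ^ (q - 1) = 1 := by rw [← hord]; exact pow_orderOf_eq_one T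
      have hχ'q : χ' ^ 2 = 1 := ((quadraticChar_isQuadratic F).comp _).sq_eq_one
      have hχ'1 : χ' ≠ 1 := by
        obtain ⟨a, ha⟩ := quadraticChar_exists_neg_one' hF2
        intro h
        have h2 := DFunLike.congr_fun h ((a : F))
        rw [MulChar.one_apply_coe] at h2
        rw [hχ', MulChar.ringHomComp_apply, ha] at h2
        norm_num at h2
      obtain ⟨n, hn⟩ := hT χ'
      have h2n : T ^ (2 * n) = 1 := by rw [mul_comm, pow_mul, ← hn, hχ'q]
      have hdvd : (q - 1) ∣ 2 * n := by rw [← hord]; exact orderOf_dvd_of_pow_eq_one h2n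
      have hndvd : ¬(q - 1) ∣ n := by
        intro hdv
        apply hχ'1
        obtain ⟨k, rfl⟩ := hdv
        rw [hn, pow_mul, hTq1, one_pow]
      obtain ⟨k, hk⟩ := hdvd
      have hnm : n = m * k := by
        refine Nat.eq_of_mul_eq_mul_left (show 0 < 2 by norm_num) ?_
        rw [hk, hq1, mul_assoc]
      have hkodd : k % 2 = 1 := by
        rcases Nat.even_or_odd k with he | ho
        · exfalso
          apply hndvd
          obtain ⟨t, rfl⟩ := he
          exact ⟨t, by rw [hnm, hq1]; ring⟩
        · exact Nat.odd_iff.mp ho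
      have hTm2 : (T ^ m) ^ 2 = 1 := by rw [← pow_mul, mul_comm, ← hq1, hTq1]
      obtain ⟨t, ht⟩ : ∃ t, k = 2 * t + 1 := ⟨k / 2, by omega⟩
      rw [hn, hnm, pow_mul, ht, pow_succ, pow_mul, hTm2, one_pow, one_mul]
    rw [← key, hχ', MulChar.ringHomComp_apply]
    simp
  -- number of square roots
  have hN : ((Finset.univ.filter fun x : F => d - x ^ 2 = 0).card : ℂ) =
      ((quadraticChar F d : ℤ) : ℂ) + 1 := by
    have h1 := quadraticChar_card_sqrts hF2 d
    have h2 : ({x : F | x ^ 2 = d}.toFinset) = Finset.univ.filter fun x : F => d - x ^ 2 = 0 := by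
      ext x
      simp only [Set.mem_toFinset, Set.mem_setOf_eq, Finset.mem_filter, Finset.mem_univ, true_and,
        sub_eq_zero, eq_comm]
      exact ⟨fun h => (sub_eq_zero.mpr h).symm, fun h => sub_eq_zero.mp h.symm⟩
    rw [h2] at h1
    exact_mod_cast congrArg (Int.cast : ℤ → ℂ) h1
  -- put everything together
  calc ∑ y : Fˣ, ∑ z : Fˣ, theta p F ((z : F) * d) * theta p F (-(z : F) * (y : F) ^ 2)
      = ∑ y : Fˣ, ((if d - (y : F) ^ 2 = 0 then (q : ℂ) else 0) - 1) := by
        refine Finset.sum_congr rfl fun y _ => ?_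
        rw [← hinner (d - (y : F) ^ 2)]
        refine Finset.sum_congr rfl fun z _ => ?_
        rw [← AddChar.map_add_eq_mul]
        congr 1
        ring
    _ = (∑ y : F, ((if d - y ^ 2 = 0 then (q : ℂ) else 0) - 1)) -
        ((if d - (0 : F) ^ 2 = 0 then (q : ℂ) else 0) - 1) :=
        sum_units_eq (fun y : F => (if d - y ^ 2 = 0 then (q : ℂ) else 0) - 1)
    _ = 1 + (q : ℂ) * (T ^ m) d := by
        rw [Finset.sum_sub_distrib, Finset.sum_const, ← Finset.sum_filter, Finset.sum_const]
        rw [if_neg (by simpa using hd)]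
        rw [nsmul_eq_mul, nsmul_eq_mul, hN, ← hchar]
        simp only [hq, Finset.card_univ]
        push_cast
        ring
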